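/- Under the modified overparametrized gradient flow ∂_s Z(s) = -Pen[D[Z(s)]]∇_x C[x[Z(s)]] with C[x] = (1/(2N))‖x - y‖² and maximal rank n = dim output ≤ K along the orbit, the cost satisfies C[x[Z(s)]] = e^{-2s/N} C[x[Z(0)]] for all s ≥ 0; in particular C[x[Z(s)]] → 0 as s → ∞. -/

import Mathlib

/-!
Because `D` has full row rank, `Dᵀ (D Dᵀ)⁻¹` is a right inverse of `D`, so by the chain rule the
preconditioned flow moves the output `u = x ∘ Z` exactly along `-∇C(u) = -(u - y) / N`. Hence
`u - y` decays like `e^{-s/N}` and the quadratic cost like `e^{-2s/N}`.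
-/

open Matrix

namespace Matrix

variable {R : Type*} {m n : Type*} [Fintype m] [DecidableEq m]

theorem isUnit_of_rank_eq_card [Field R] {A : Matrix m m R} (h : A.rank = Fintype.card m) :
    IsUnit A := by
  rw [← mulVec_surjective_iff_isUnit]
  exact LinearMap.range_eq_top.mp <|
    Submodule.eq_top_of_finrank_eq (by
      rw [show Module.finrank R (LinearMap.range A.mulVecLin) = A.rank from rfl, h,
        Module.finrank_fintype_fun_eq_card])

theorem mul_transpose_mul_inv_of_rank_eq_card [Field R] [LinearOrder R] [IsStrictOrderedRing R]
    [Fintype n] {A : Matrix m n R} (h : A.rank = Fintype.card m) :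
    A * (Aᵀ * (A * Aᵀ)⁻¹) = 1 := by
  rw [← Matrix.mul_assoc, mul_nonsing_inv]
  exact (isUnit_iff_isUnit_det _).mp (isUnit_of_rank_eq_card (by rw [rank_self_mul_transpose, h]))

end Matrix

open RealInnerProductSpace in
theorem hasGradientAt_const_mul_norm_sub_sq {E : Type*} [NormedAddCommGroup E]
    [InnerProductSpace ℝ E] [CompleteSpace E] (c : ℝ) (y v : E) :
    HasGradientAt (fun v => c * ‖v - y‖ ^ 2) ((2 * c) • (v - y)) v := by
  rw [hasGradientAt_iff_hasFDerivAt]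
  refine (((hasFDerivAt_id v).sub_const y).norm_sq.const_mul c).congr_fderiv ?_
  ext w
  simp
  ring

theorem sub_eq_exp_smul_of_hasDerivAt {E : Type*} [NormedAddCommGroup E] [NormedSpace ℝ E]
    {u : ℝ → E} {c : ℝ} {y : E} (hu : ∀ t, HasDerivAt u (-c • (u t - y)) t) (t : ℝ) :
    u t - y = Real.exp (-c * t) • (u 0 - y) := by
  have hderiv : ∀ s, HasDerivAt (fun s => Real.exp (c * s) • (u s - y)) 0 s := by
    intro s
    have hexp : HasDerivAt (fun s => Real.exp (c * s)) (Real.exp (c * s) * c) s := by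
      simpa using ((hasDerivAt_id s).const_mul c).exp
    exact (hexp.smul ((hu s).sub_const y)).congr_deriv (by module)
  have hconst : Real.exp (c * t) • (u t - y) = u 0 - y := by
    simpa using is_const_of_deriv_eq_zero (fun s => (hderiv s).differentiableAt)
      (fun s => (hderiv s).deriv) t 0
  rw [← hconst, smul_smul, ← Real.exp_add, neg_mul, neg_add_cancel, Real.exp_zero, one_smul]

theorem overparam_flow_cost_decay_general
    (n K : ℕ) (N : ℝ) (hN : 0 < N) (y : EuclideanSpace ℝ (Fin n))
    (C : EuclideanSpace ℝ (Fin n) → ℝ)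
    (hC : ∀ v, C v = (1 / (2 * N)) * ‖v - y‖ ^ 2)
    (x : EuclideanSpace ℝ (Fin K) → EuclideanSpace ℝ (Fin n))
    (D : EuclideanSpace ℝ (Fin K) → Matrix (Fin n) (Fin K) ℝ)
    (hx : ∀ W, HasFDerivAt x (LinearMap.toContinuousLinearMap (Matrix.toEuclideanLin (D W))) W)
    (Z : ℝ → EuclideanSpace ℝ (Fin K))
    (hrank : ∀ s : ℝ, (D (Z s)).rank = n)
    (hode : ∀ s : ℝ, HasDerivAt Z
      (-(Matrix.toEuclideanLin ((D (Z s))ᵀ * (D (Z s) * (D (Z s))ᵀ)⁻¹)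
        (gradient C (x (Z s))))) s) :
    (∀ s : ℝ, 0 ≤ s → C (x (Z s)) = Real.exp (-2 * s / N) * C (x (Z 0))) ∧
      Filter.Tendsto (fun s => C (x (Z s))) Filter.atTop (nhds 0) := by
  have hgrad : ∀ v, gradient C v = (1 / N) • (v - y) := by
    intro v
    rw [funext hC, (hasGradientAt_const_mul_norm_sub_sq _ y v).gradient]
    ring_nf
  have hflow : ∀ s, HasDerivAt (fun t => x (Z t)) (-(1 / N) • (x (Z s) - y)) s := by
    intro s
    refine ((hx (Z s)).comp_hasDerivAt s (hode s)).congr_deriv ?_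
    rw [LinearMap.coe_toContinuousLinearMap', map_neg, ← LinearMap.comp_apply,
      ← toLpLin_mul_same, mul_transpose_mul_inv_of_rank_eq_card (by simpa using hrank s),
      toLpLin_one, LinearMap.id_apply, hgrad, neg_smul]
  have hcost : ∀ s, C (x (Z s)) = Real.exp (-2 * s / N) * C (x (Z 0)) := by
    intro s
    rw [hC, hC, sub_eq_exp_smul_of_hasDerivAt hflow s, norm_smul, mul_pow, Real.norm_eq_abs,
      sq_abs, ← Real.exp_nat_mul]
    push_cast
    ring_nf
  refine ⟨fun s _ => hcost s, ?_⟩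
  have hexp : Filter.Tendsto (fun s : ℝ => Real.exp (-2 * s / N)) Filter.atTop (nhds 0) := by
    refine (Real.tendsto_exp_neg_atTop_nhds_zero.comp
      (Filter.tendsto_id.const_mul_atTop (by positivity : 0 < 2 / N))).congr fun s => ?_
    simp only [Function.comp, id]
    ring_nf
  simpa only [zero_mul, ← hcost] using hexp.mul_const (C (x (Z 0)))

theorem overparam_flow_cost_decay
    (n K : ℕ) (hnK : n ≤ K) (N : ℝ) (hN : 0 < N) (y : EuclideanSpace ℝ (Fin n))
    (C : EuclideanSpace ℝ (Fin n) → ℝ)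
    (hC : ∀ v, C v = (1 / (2 * N)) * ‖v - y‖ ^ 2)
    (x : EuclideanSpace ℝ (Fin K) → EuclideanSpace ℝ (Fin n))
    (D : EuclideanSpace ℝ (Fin K) → Matrix (Fin n) (Fin K) ℝ)
    (hx : ∀ W, HasFDerivAt x (LinearMap.toContinuousLinearMap (Matrix.toEuclideanLin (D W))) W)
    (Z : ℝ → EuclideanSpace ℝ (Fin K))
    (hrank : ∀ s : ℝ, (D (Z s)).rank = n)
    (hode : ∀ s : ℝ, HasDerivAt Z
      (-(Matrix.toEuclideanLin ((D (Z s))ᵀ * (D (Z s) * (D (Z s))ᵀ)⁻¹)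
        (gradient C (x (Z s))))) s) :
    (∀ s : ℝ, 0 ≤ s → C (x (Z s)) = Real.exp (-2 * s / N) * C (x (Z 0))) ∧
      Filter.Tendsto (fun s => C (x (Z s))) Filter.atTop (nhds 0) :=
  overparam_flow_cost_decay_general n K N hN y C hC x D hx Z hrank hode
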